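/- Let f : ℝⁿ → ℝ ∪ {±∞} with {x : f(x) < +∞} unbounded. Then the function v ↦ f^↑(∞; v) from ℝⁿ to the extended reals is convex, positively homogeneous, and lower semi-continuous. -/

import Mathlib

open Filter Topology Metric Set Bornology
open scoped InnerProductSpace Pointwise

noncomputable section

/-- Euclidean `n`-space. -/
abbrev En (n : ℕ) : Type := EuclideanSpace ℝ (Fin n)

/-- The Clarke tangent cone at infinity of `C ⊆ E`, where "going to infinity" is
measured by `‖p x‖ → ∞` for a projection map `p`:  `v` belongs to the cone iff for all
sequences `x k ∈ C` with `‖p (x k)‖ → ∞` and all positive sequences `t k → 0` there is a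
sequence `w k → v` with `x k + t k • w k ∈ C` for all `k`. -/
def tangentConeAtInfty {E F : Type*} [NormedAddCommGroup E] [NormedSpace ℝ E] [Norm F]
    (p : E → F) (C : Set E) : Set E :=
  {v | ∀ (x : ℕ → E) (t : ℕ → ℝ), (∀ k, x k ∈ C) →
      Tendsto (fun k => ‖p (x k)‖) atTop atTop →
      (∀ k, 0 < t k) → Tendsto t atTop (𝓝 0) →
      ∃ w : ℕ → E, Tendsto w atTop (𝓝 v) ∧ ∀ k, x k + t k • w k ∈ C}

/-- Extended-real subtraction with the paper's convention that `λ₁ + λ₂ = +∞` whenever one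
of the summands is `+∞`; thus `a - b = +∞` if `a = +∞` or `b = -∞`. -/
def esub (a b : EReal) : EReal := if a = ⊤ ∨ b = ⊥ then ⊤ else a - b

/-- The difference quotient `(f (x + t • w) - f x) / t`. -/
def dq {n : ℕ} (f : En n → EReal) (x : En n) (t : ℝ) (w : En n) : EReal :=
  esub (f (x + t • w)) (f x) / (t : EReal)

/-- The filter of neighborhoods of infinity in `ℝⁿ` (`‖x‖ → ∞`). -/
def atInfty (n : ℕ) : Filter (En n) := comap (fun x : En n => ‖x‖) atTop

/-- The upper subderivative of `f` at infinity with respect to `v`: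
`f^↑(∞; v) = lim_{ε↓0} limsup_{‖x‖→∞, t↓0} inf_{w ∈ B_ε(v)} (f(x+tw) - f(x))/t`;
since the inner `limsup` is antitone in `ε`, the limit as `ε ↓ 0` is the supremum
over `ε > 0`. -/
def upSub {n : ℕ} (f : En n → EReal) (v : En n) : EReal :=
  ⨆ (ε : ℝ) (_ : 0 < ε),
    Filter.limsup (fun q : En n × ℝ => ⨅ w ∈ closedBall v ε, dq f q.1 q.2 w)
      (atInfty n ×ˢ 𝓝[>] (0:ℝ))

/-- Corollary 4.6: `v ↦ f^↑(∞; v)` is convex (its epigraph is a convex set), positively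
homogeneous, and lower semi-continuous. -/
lemma ev_iff {n : ℕ} {P : En n × ℝ → Prop} :
    (∀ᶠ q in atInfty n ×ˢ 𝓝[>] (0:ℝ), P q) ↔
      ∃ R δ : ℝ, 0 < δ ∧ ∀ x t, R ≤ ‖x‖ → 0 < t → t < δ → P (x, t) := by
  have hb : (atInfty n ×ˢ 𝓝[>] (0:ℝ)).HasBasis (fun p : ℝ × ℝ => True ∧ 0 < p.2)
      (fun p => ((fun x : En n => ‖x‖) ⁻¹' Ici p.1) ×ˢ Ioo 0 p.2) :=
    (atTop_basis.comap _).prod (nhdsGT_basis 0)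
  rw [hb.eventually_iff]
  constructor
  · rintro ⟨⟨R, δ⟩, ⟨-, hδ⟩, h⟩
    exact ⟨R, δ, hδ, fun x t hx ht htδ => h ⟨hx, ht, htδ⟩⟩
  · rintro ⟨R, δ, hδ, h⟩
    exact ⟨(R, δ), ⟨trivial, hδ⟩, fun q hq => h q.1 q.2 hq.1 hq.2.1 hq.2.2⟩

lemma esub_tri {a c : EReal} (ha : a ≠ ⊤) (hc : c ≠ ⊥) (r : ℝ) :
    a - c ≤ (a - (r : EReal)) + ((r : EReal) - c) := by
  induction a with
  | bot => simp
  | coe a =>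
    induction c with
    | bot => exact absurd rfl hc
    | coe c => norm_cast; linarith
    | top => simp
  | top => exact absurd rfl ha

lemma div_lt_coe_iff {X : EReal} {b t : ℝ} (ht : 0 < t) :
    X / (t : EReal) < (b : EReal) ↔ X < ((b * t : ℝ) : EReal) := by
  have h : ((b * t : ℝ) : EReal) / (t : EReal) = (b : EReal) := by
    rw [← EReal.coe_div]; congr 1; field_simp
  rw [← h]
  exact (EReal.strictMono_div_right_of_pos (by exact_mod_cast ht) (EReal.coe_ne_top t)).lt_iff_lt

lemma ne_top_of_div_lt {X : EReal} {t b : ℝ} (ht : 0 < t)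
    (h : X / (t : EReal) < (b : EReal)) : X ≠ ⊤ := by
  intro hX
  rw [hX, EReal.top_div_of_pos_ne_top (by exact_mod_cast ht) (EReal.coe_ne_top t)] at h
  exact not_top_lt h

lemma esub_ne_top {a b : EReal} (h : esub a b ≠ ⊤) : a ≠ ⊤ ∧ b ≠ ⊥ := by
  by_contra hcon
  rw [not_and_or, not_not, not_not] at hcon
  exact h (if_pos hcon)

def mulIso (c : ℝ) (hc : 0 < c) : EReal ≃o EReal where
  toFun a := (c : EReal) * a
  invFun a := ((c⁻¹ : ℝ) : EReal) * a
  left_inv a := by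
    show ((c⁻¹ : ℝ) : EReal) * ((c : EReal) * a) = a
    rw [← mul_assoc, ← EReal.coe_mul, inv_mul_cancel₀ hc.ne', EReal.coe_one, one_mul]
  right_inv a := by
    show ((c : ℝ) : EReal) * (((c⁻¹ : ℝ) : EReal) * a) = a
    rw [← mul_assoc, ← EReal.coe_mul, mul_inv_cancel₀ hc.ne', EReal.coe_one, one_mul]
  map_rel_iff' := by
    intro a b
    simp only [Equiv.coe_fn_mk]
    constructor
    · intro h
      have h2 := mul_le_mul_of_nonneg_left h (le_of_lt (by exact_mod_cast inv_pos.2 hc :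
        (0:EReal) < ((c⁻¹:ℝ):EReal)))
      rwa [← mul_assoc, ← mul_assoc, ← EReal.coe_mul, inv_mul_cancel₀ hc.ne', EReal.coe_one,
        one_mul, one_mul] at h2
    · intro h
      exact mul_le_mul_of_nonneg_left h (by exact_mod_cast hc.le)

lemma mul_div_scale {c t : ℝ} (hc : c ≠ 0) (A : EReal) :
    (c : EReal) * (A / ((c * t : ℝ) : EReal)) = A / (t : EReal) := by
  rw [EReal.mul_div, mul_comm (c : EReal) A, EReal.coe_mul, mul_comm (c : EReal) (t : EReal),
    EReal.mul_div_mul_cancel (by simp) (by simp) (by exact_mod_cast hc)]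

lemma map_mul_nhdsWithin {c : ℝ} (hc : 0 < c) :
    map (fun t => c * t) (𝓝[>] (0:ℝ)) = 𝓝[>] (0:ℝ) := by
  have key : ∀ c : ℝ, 0 < c → map (fun t => c * t) (𝓝[>] (0:ℝ)) ≤ 𝓝[>] (0:ℝ) := by
    intro c hc
    apply Filter.Tendsto.mono_right _ le_rfl
    apply tendsto_nhdsWithin_of_tendsto_nhds_of_eventually_within
    · have : Tendsto (fun t : ℝ => c * t) (𝓝 0) (𝓝 (c * 0)) :=
        (continuous_const.mul continuous_id).tendsto 0
      simpa using this.mono_left nhdsWithin_le_nhds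
    · filter_upwards [self_mem_nhdsWithin] with t ht
      exact mul_pos hc ht
  refine le_antisymm (key c hc) ?_
  have h2 := key c⁻¹ (inv_pos.2 hc)
  calc 𝓝[>] (0:ℝ) = map (fun t => c * t) (map (fun t => c⁻¹ * t) (𝓝[>] (0:ℝ))) := by
        rw [Filter.map_map]
        have : ((fun t => c * t) ∘ fun t => c⁻¹ * t) = id := by
          funext t; simp [← mul_assoc, mul_inv_cancel₀ hc.ne']
        rw [this, Filter.map_id]
    _ ≤ map (fun t => c * t) (𝓝[>] (0:ℝ)) := map_mono h2

lemma limsup_map' {α β : Type*} (u : β → EReal) (m : α → β) (f : Filter α) :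
    limsup u (map m f) = limsup (fun a => u (m a)) f := by
  simp [Filter.limsup_eq, eventually_map]

def lims {n : ℕ} (f : En n → EReal) (v : En n) (ε : ℝ) : EReal :=
  Filter.limsup (fun q : En n × ℝ => ⨅ w ∈ closedBall v ε, dq f q.1 q.2 w)
    (atInfty n ×ˢ 𝓝[>] (0:ℝ))

lemma upSub_eq {n : ℕ} (f : En n → EReal) (v : En n) :
    upSub f v = ⨆ (ε : ℝ) (_ : 0 < ε), lims f v ε := rfl

lemma upSub_le_coe_iff {n : ℕ} (f : En n → EReal) (v : En n) (s : ℝ) :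
    upSub f v ≤ (s : EReal) ↔
      ∀ ε > (0:ℝ), ∀ b : ℝ, s < b → ∃ R δ : ℝ, 0 < δ ∧
        ∀ x t, R ≤ ‖x‖ → 0 < t → t < δ →
          ∃ w ∈ closedBall v ε, dq f x t w < (b : EReal) := by
  rw [upSub, iSup₂_le_iff]
  constructor
  · intro h ε hε b hb
    have hlt : Filter.limsup (fun q : En n × ℝ => ⨅ w ∈ closedBall v ε, dq f q.1 q.2 w)
        (atInfty n ×ˢ 𝓝[>] (0:ℝ)) < (b : EReal) :=
      lt_of_le_of_lt (h ε hε) (by exact_mod_cast hb)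
    have hev := eventually_lt_of_limsup_lt hlt
    rw [ev_iff] at hev
    obtain ⟨R, δ, hδ, hh⟩ := hev
    refine ⟨R, δ, hδ, fun x t hx ht htδ => ?_⟩
    have := hh x t hx ht htδ
    rw [iInf_lt_iff] at this
    obtain ⟨w, hw⟩ := this
    rw [iInf_lt_iff] at hw
    obtain ⟨hmem, hww⟩ := hw
    exact ⟨w, hmem, hww⟩
  · intro h ε hε
    rw [limsup_le_iff]
    intro y hy
    obtain ⟨b, hsb, hby⟩ := EReal.exists_between_coe_real hy
    obtain ⟨R, δ, hδ, hh⟩ := h ε hε b (by exact_mod_cast hsb)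
    rw [ev_iff]
    refine ⟨R, δ, hδ, fun x t hx ht htδ => ?_⟩
    obtain ⟨w, hmem, hww⟩ := hh x t hx ht htδ
    exact lt_of_le_of_lt (iInf₂_le w hmem) (hww.trans hby)

/-- The key combination step. -/
lemma dq_combine {n : ℕ} (f : En n → EReal) (x : En n) {t : ℝ} (ht : 0 < t)
    (w₁ w₂ : En n) {b₁ b₂ : ℝ}
    (h₁ : dq f x t w₁ < (b₁ : EReal))
    (h₂ : dq f (x + t • w₁) t w₂ < (b₂ : EReal)) :
    dq f x t (w₁ + w₂) < ((b₁ + b₂ : ℝ) : EReal) := by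
  set x' := x + t • w₁ with hx'
  simp only [dq] at h₁ h₂ ⊢
  have hxw : x + t • (w₁ + w₂) = x' + t • w₂ := by rw [smul_add, hx', add_assoc]
  rw [hxw]
  set a := f (x' + t • w₂)
  set bb := f x'
  set c := f x
  obtain ⟨ha, hbb⟩ := esub_ne_top (ne_top_of_div_lt ht h₂)
  obtain ⟨hbb', hc⟩ := esub_ne_top (ne_top_of_div_lt ht h₁)
  rw [div_lt_coe_iff ht] at h₁ h₂ ⊢
  rw [esub, if_neg (by push_neg; exact ⟨ha, hc⟩)]
  rw [esub, if_neg (by push_neg; exact ⟨ha, hbb⟩)] at h₂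
  rw [esub, if_neg (by push_neg; exact ⟨hbb', hc⟩)] at h₁
  have hr : ((bb.toReal : ℝ) : EReal) = bb := EReal.coe_toReal hbb' hbb
  have tri : a - c ≤ (a - bb) + (bb - c) := by
    rw [← hr]; exact esub_tri ha hc _
  refine lt_of_le_of_lt tri (lt_of_lt_of_le (EReal.add_lt_add h₂ h₁) ?_)
  rw [← EReal.coe_add]
  exact le_of_eq (by norm_cast; ring)

lemma upSub_add_le {n : ℕ} (f : En n → EReal) {u₁ u₂ : En n} {s₁ s₂ : ℝ}
    (h₁ : upSub f u₁ ≤ (s₁ : EReal)) (h₂ : upSub f u₂ ≤ (s₂ : EReal)) :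
    upSub f (u₁ + u₂) ≤ ((s₁ + s₂ : ℝ) : EReal) := by
  rw [upSub_le_coe_iff] at h₁ h₂ ⊢
  intro ε hε b hb
  set d := (b - (s₁ + s₂)) / 2 with hd
  have hdpos : 0 < d := by simp only [hd]; linarith
  obtain ⟨R₁, δ₁, hδ₁, H₁⟩ := h₁ (ε/2) (by positivity) (s₁ + d) (by linarith)
  obtain ⟨R₂, δ₂, hδ₂, H₂⟩ := h₂ (ε/2) (by positivity) (s₂ + d) (by linarith)
  set M := ‖u₁‖ + ε/2 + 1 with hM
  have hMpos : 0 < M := by positivity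
  refine ⟨max R₁ (R₂ + 1), min δ₁ (min δ₂ (1/M)), by positivity, fun x t hx ht htδ => ?_⟩
  have htδ₁ : t < δ₁ := lt_of_lt_of_le htδ (min_le_left _ _)
  have htδ₂ : t < δ₂ := lt_of_lt_of_le htδ ((min_le_right _ _).trans (min_le_left _ _))
  have htM : t < 1/M := lt_of_lt_of_le htδ ((min_le_right _ _).trans (min_le_right _ _))
  obtain ⟨w₁, hw₁mem, hw₁⟩ := H₁ x t (le_trans (le_max_left _ _) hx) ht htδ₁
  have hw₁d : dist w₁ u₁ ≤ ε/2 := mem_closedBall.1 hw₁mem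
  have hw₁norm : ‖w₁‖ ≤ M - 1 := by
    have htri := dist_triangle w₁ u₁ 0
    simp only [dist_zero_right] at htri
    simp only [hM]; linarith
  set x' := x + t • w₁ with hx'
  have hx'norm : R₂ ≤ ‖x'‖ := by
    have h1 : ‖x‖ ≤ ‖x'‖ + ‖t • w₁‖ := by
      have := norm_add_le (x + t • w₁) (-(t • w₁))
      simpa [hx'] using this
    have htM1 : t * M < 1 := (lt_div_iff₀ hMpos).mp htM
    have h2 : ‖t • w₁‖ ≤ 1 := by
      rw [norm_smul, Real.norm_eq_abs, abs_of_pos ht]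
      nlinarith
    have h3 : R₂ + 1 ≤ ‖x‖ := le_trans (le_max_right _ _) hx
    linarith
  obtain ⟨w₂, hw₂mem, hw₂⟩ := H₂ x' t hx'norm ht htδ₂
  refine ⟨w₁ + w₂, ?_, ?_⟩
  · rw [mem_closedBall]
    calc dist (w₁ + w₂) (u₁ + u₂) ≤ dist w₁ u₁ + dist w₂ u₂ := dist_add_add_le _ _ _ _
      _ ≤ ε/2 + ε/2 := add_le_add hw₁d (mem_closedBall.1 hw₂mem)
      _ = ε := by ring
  · have := dq_combine f x ht w₁ w₂ hw₁ hw₂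
    have hbe : ((s₁ + d) + (s₂ + d) : ℝ) = b := by simp only [hd]; ring
    rwa [hbe] at this

lemma dq_smul {n : ℕ} (f : En n → EReal) (x : En n) (t : ℝ) {c : ℝ} (hc : 0 < c) (w : En n) :
    dq f x t (c • w) = (c : EReal) * dq f x (c * t) w := by
  have h : x + t • (c • w) = x + (c * t) • w := by rw [smul_smul, mul_comm]
  simp only [dq, h]
  rw [mul_div_scale hc.ne']

lemma iInf_ball_smul {n : ℕ} (f : En n → EReal) (x : En n) (t : ℝ) (v : En n)
    {c ε : ℝ} (hc : 0 < c) :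
    (⨅ w ∈ closedBall (c • v) (c * ε), dq f x t w)
      = (c : EReal) * ⨅ w ∈ closedBall v ε, dq f x (c * t) w := by
  have step1 : (⨅ w ∈ closedBall (c • v) (c * ε), dq f x t w)
      = ⨅ w ∈ closedBall v ε, dq f x t (c • w) := by
    apply le_antisymm
    · refine le_iInf₂ fun w hw => iInf₂_le (c • w) ?_
      rw [mem_closedBall] at hw ⊢
      rw [dist_smul₀, Real.norm_eq_abs, abs_of_pos hc]
      exact mul_le_mul_of_nonneg_left hw hc.le
    · refine le_iInf₂ fun w hw => ?_
      have h1 : c⁻¹ • w ∈ closedBall v ε := by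
        rw [mem_closedBall] at hw ⊢
        have h2 : dist (c⁻¹ • w) v = ‖c⁻¹‖ * dist w (c • v) := by
          rw [← dist_smul₀ c⁻¹ w (c • v), inv_smul_smul₀ hc.ne']
        rw [h2, Real.norm_eq_abs, abs_of_pos (inv_pos.2 hc)]
        calc c⁻¹ * dist w (c • v) ≤ c⁻¹ * (c * ε) :=
              mul_le_mul_of_nonneg_left hw (inv_pos.2 hc).le
          _ = ε := by field_simp
      have h3 := iInf₂_le (α := EReal) (f := fun w _ => dq f x t (c • w)) (c⁻¹ • w) h1
      rwa [smul_inv_smul₀ hc.ne'] at h3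
  rw [step1]
  show (⨅ w ∈ closedBall v ε, dq f x t (c • w))
      = (mulIso c hc) (⨅ w ∈ closedBall v ε, dq f x (c * t) w)
  rw [(mulIso c hc).map_iInf]
  refine iInf_congr fun w => ?_
  rw [(mulIso c hc).map_iInf]
  refine iInf_congr fun hw => ?_
  exact dq_smul f x t hc w

lemma lims_smul {n : ℕ} (f : En n → EReal) (v : En n) {c ε : ℝ} (hc : 0 < c) :
    lims f (c • v) (c * ε) = (c : EReal) * lims f v ε := by
  have hmap : map (fun q : En n × ℝ => (q.1, c * q.2)) (atInfty n ×ˢ 𝓝[>] (0:ℝ))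
      = atInfty n ×ˢ 𝓝[>] (0:ℝ) := by
    have h1 : (fun q : En n × ℝ => (q.1, c * q.2))
        = Prod.map (id : En n → En n) (fun t => c * t) := rfl
    rw [h1, ← Filter.prod_map_map_eq' id (fun t => c * t), Filter.map_id, map_mul_nhdsWithin hc]
  set G : En n × ℝ → EReal := fun q => ⨅ w ∈ closedBall v ε, dq f q.1 q.2 w with hG
  have step1 : lims f (c • v) (c * ε)
      = limsup (fun q : En n × ℝ => (mulIso c hc) (G (q.1, c * q.2)))
        (atInfty n ×ˢ 𝓝[>] (0:ℝ)) := by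
    rw [lims]
    congr 1
    funext q
    exact iInf_ball_smul f q.1 q.2 v hc
  rw [step1]
  have step2 := ((mulIso c hc).limsup_apply (f := atInfty n ×ˢ 𝓝[>] (0:ℝ))
    (u := fun q : En n × ℝ => G (q.1, c * q.2)))
  rw [← step2]
  show (mulIso c hc) _ = (mulIso c hc) (lims f v ε)
  congr 1
  have h2 := limsup_map' G (fun q : En n × ℝ => (q.1, c * q.2))
    (atInfty n ×ˢ 𝓝[>] (0:ℝ))
  rw [hmap] at h2
  rw [← h2, lims, hG]

lemma upSub_smul {n : ℕ} (f : En n → EReal) (v : En n) {c : ℝ} (hc : 0 < c) :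
    upSub f (c • v) = (c : EReal) * upSub f v := by
  have step1 : upSub f (c • v) = ⨆ (ε : ℝ) (_ : 0 < ε), lims f (c • v) (c * ε) := by
    rw [upSub_eq]
    apply le_antisymm
    · refine iSup₂_le fun ε hε => ?_
      have h1 : lims f (c • v) ε = lims f (c • v) (c * (ε / c)) := by
        rw [mul_div_cancel₀ _ hc.ne']
      rw [h1]
      exact le_iSup₂ (f := fun ε (_ : 0 < ε) => lims f (c • v) (c * ε)) (ε / c)
        (by positivity)
    · exact iSup₂_le fun ε hε =>
        le_iSup₂ (f := fun ε (_ : 0 < ε) => lims f (c • v) ε) (c * ε) (by positivity)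
  rw [step1]
  have step2 : (⨆ (ε : ℝ) (_ : 0 < ε), lims f (c • v) (c * ε))
      = ⨆ (ε : ℝ) (_ : 0 < ε), (c : EReal) * lims f v ε := by
    refine iSup_congr fun ε => iSup_congr fun hε => lims_smul f v hc
  rw [step2, upSub_eq]
  show (⨆ (ε : ℝ) (_ : 0 < ε), (mulIso c hc) (lims f v ε))
      = (mulIso c hc) (⨆ (ε : ℝ) (_ : 0 < ε), lims f v ε)
  rw [(mulIso c hc).map_iSup]
  exact iSup_congr fun ε => ((mulIso c hc).map_iSup _).symm

theorem stmt8 (n : ℕ) (f : En n → EReal)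
    (hunb : ¬ IsBounded {x : En n | f x < ⊤}) :
    Convex ℝ {p : En n × ℝ | upSub f p.1 ≤ (p.2 : EReal)} ∧
    (∀ (v : En n) (c : ℝ), 0 < c → upSub f (c • v) = (c : EReal) * upSub f v) ∧
    LowerSemicontinuous (upSub f) := by
  refine ⟨?_, fun v c hc => upSub_smul f v hc, ?_⟩
  · -- convexity of the epigraph
    intro p hp q hq a b ha hb hab
    rcases eq_or_lt_of_le ha with ha0 | ha0
    · have hb1 : b = 1 := by linarith
      simpa [← ha0, hb1] using hq
    rcases eq_or_lt_of_le hb with hb0 | hb0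
    · have ha1 : a = 1 := by linarith
      simpa [← hb0, ha1] using hp
    have h1 : upSub f (a • p.1) ≤ ((a * p.2 : ℝ) : EReal) := by
      rw [upSub_smul f p.1 ha0, EReal.coe_mul]
      exact mul_le_mul_of_nonneg_left hp (by exact_mod_cast ha0.le)
    have h2 : upSub f (b • q.1) ≤ ((b * q.2 : ℝ) : EReal) := by
      rw [upSub_smul f q.1 hb0, EReal.coe_mul]
      exact mul_le_mul_of_nonneg_left hq (by exact_mod_cast hb0.le)
    have h3 := upSub_add_le f h1 h2
    simpa [smul_eq_mul] using h3
  · -- lower semicontinuity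
    intro v y hy
    rw [upSub_eq, gt_iff_lt, lt_iSup_iff] at hy
    obtain ⟨ε, hy⟩ := hy
    rw [lt_iSup_iff] at hy
    obtain ⟨hε, hy⟩ := hy
    filter_upwards [Metric.ball_mem_nhds v (half_pos hε)] with v' hv'
    refine lt_of_lt_of_le hy ?_
    calc lims f v ε ≤ lims f v' (ε / 2) := by
          refine Filter.limsup_le_limsup (Eventually.of_forall fun q => ?_)
          have hsub : closedBall v' (ε / 2) ⊆ closedBall v ε := by
            apply closedBall_subset_closedBall'
            have := mem_ball.1 hv'
            linarith
          exact le_iInf₂ fun w hw => iInf₂_le w (hsub hw)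
      _ ≤ upSub f v' := by
          rw [upSub_eq]
          exact le_iSup₂ (f := fun ε (_ : 0 < ε) => lims f v' ε) (ε / 2) (half_pos hε)
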